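/- arXiv:2512.19462 — 2 statements merged into one kernel-verified Lean document; each statement's English description precedes it below -/
import Mathlib

section
/- For all n ≥ 1 and 0 ≤ k ≤ n−1, the number of 132-avoiding permutations of length n with exactly k short values equals T_{n−1,k} = ((n−k)/n)·binomial(n−1+k, n−1); moreover there are no such permutations when k ≥ n. -/
open List

attribute [local instance] Classical.propDecidable

/-- `l` is a permutation of length `n`, i.e. a list containing each of `1,…,n` exactly once. -/
def IsPermList (n : ℕ) (l : List ℕ) : Prop :=
  l.Perm (List.range' 1 n)

/-- Two sequences (with distinct entries) are order-isomorphic: same length and the same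
pairwise order relations. -/
def OrderIsoList (a b : List ℕ) : Prop :=
  a.length = b.length ∧
    ∀ i j, i < j → j < a.length →
      (a.getD i 0 < a.getD j 0 ↔ b.getD i 0 < b.getD j 0)

/-- `l` contains the pattern `p`: some subsequence of `l` is order-isomorphic to `p`. -/
def ContainsPat (l p : List ℕ) : Prop :=
  ∃ s, s.Sublist l ∧ OrderIsoList s p

/-- `l` avoids the pattern `p`. -/
def AvoidsPat (l p : List ℕ) : Prop := ¬ ContainsPat l p

/-- Relabel the entries of a list of distinct naturals order-isomorphically with `1,…,m`. -/
def standardize (l : List ℕ) : List ℕ :=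
  l.map fun x => (l.filter fun y => y ≤ x).length

/-- Insert the new maximum value `l.length + 1` immediately after the first `i` entries. -/
def insertMax (l : List ℕ) (i : ℕ) : List ℕ :=
  l.take i ++ (l.length + 1) :: l.drop i

/-- The insertion step at position `i` for the pattern `p`: insert a new maximum after the
first `i` entries, keep the longest prefix avoiding `p` (i.e. remove the minimal suffix so
that the result avoids `p`), then standardize. -/
noncomputable def insStep (p l : List ℕ) (i : ℕ) : List ℕ :=
  standardize ((insertMax l i).take
    (Nat.findGreatest (fun k => AvoidsPat ((insertMax l i).take k) p)
      (insertMax l i).length))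

/-- The entry at (0-indexed) position `i` of `l` is a right-to-left maximum: it is larger
than every entry to its right. -/
def IsRLMax (l : List ℕ) (i : ℕ) : Prop :=
  ∀ j, i < j → j < l.length → l.getD j 0 < l.getD i 0

/-- The number of short values of `l`: entries that are not right-to-left maxima. -/
noncomputable def shortCount (l : List ℕ) : ℕ :=
  {i | i < l.length ∧ ¬ IsRLMax l i}.ncard

/-- `A132 n k` is the set of `132`-avoiding permutations of length `n` with exactly `k`
short values. -/
def A132 (n k : ℕ) : Set (List ℕ) :=
  {l | IsPermList n l ∧ AvoidsPat l [1, 3, 2] ∧ shortCount l = k}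

/-! Write `a(n, k)` for the size of `A132 n k` and split permutations according to whether
their last entry is `1`. Those of `A132 (n + 1) k` ending in `1` are exactly
`σ.map (· + 1) ++ [1]` with `σ ∈ A132 n k`. For the others, write `σ ∈ A132 n k` as
`A ++ x :: B`, where `x` is the last right-to-left maximum before the final entry (it exists
when `k + 2 ≤ n`). Avoiding 132 forces every entry of `A` above every entry of `B`, and moving
`x` to the end is a bijection onto the permutations of `A132 n (k + 1)` not ending in `1`: the
last entry of `B` is the one right-to-left maximum that is lost. Hence
`a(n + 1, k + 1) = a(n, k + 1) + a(n + 1, k)` for `k < n`, the recursion of Catalan's triangle,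
with `a(n, 0) = 1`; and `a(n, k) = 0` for `0 < n ≤ k` since the last entry is always a
right-to-left maximum. -/

theorem pair_sublist_append_iff {α : Type*} {a b : α} {A B : List α} :
    [a, b] <+ A ++ B ↔ [a, b] <+ A ∨ (a ∈ A ∧ b ∈ B) ∨ [a, b] <+ B := by
  rw [List.sublist_append_iff]
  constructor
  · rintro ⟨l₁, l₂, h, h₁, h₂⟩
    rcases l₁ with _ | ⟨x, _ | ⟨y, _ | ⟨z, l₁⟩⟩⟩ <;>
      simp only [List.nil_append, List.cons_append, List.cons.injEq] at h
    · exact .inr (.inr (h ▸ h₂))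
    · obtain ⟨rfl, rfl⟩ := h
      exact .inr (.inl ⟨List.singleton_sublist.1 h₁, List.singleton_sublist.1 h₂⟩)
    · obtain ⟨rfl, rfl, rfl⟩ := h
      exact .inl h₁
    · simp at h
  · rintro (h | ⟨ha, hb⟩ | h)
    · exact ⟨_, [], by simp, h, List.nil_sublist _⟩
    · exact ⟨[a], [b], rfl, List.singleton_sublist.2 ha, List.singleton_sublist.2 hb⟩
    · exact ⟨[], _, rfl, List.nil_sublist _, h⟩

theorem triple_sublist_append_iff {α : Type*} {a b c : α} {A B : List α} :
    [a, b, c] <+ A ++ B ↔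
      [a, b, c] <+ A ∨ ([a, b] <+ A ∧ c ∈ B) ∨ (a ∈ A ∧ [b, c] <+ B) ∨ [a, b, c] <+ B := by
  rw [List.sublist_append_iff]
  constructor
  · rintro ⟨l₁, l₂, h, h₁, h₂⟩
    rcases l₁ with _ | ⟨x, _ | ⟨y, _ | ⟨z, _ | ⟨w, l₁⟩⟩⟩⟩ <;>
      simp only [List.nil_append, List.cons_append, List.cons.injEq] at h
    · exact .inr (.inr (.inr (h ▸ h₂)))
    · obtain ⟨rfl, rfl⟩ := h
      exact .inr (.inr (.inl ⟨List.singleton_sublist.1 h₁, h₂⟩))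
    · obtain ⟨rfl, rfl, rfl⟩ := h
      exact .inr (.inl ⟨h₁, List.singleton_sublist.1 h₂⟩)
    · obtain ⟨rfl, rfl, rfl, rfl⟩ := h
      exact .inl h₁
    · simp at h
  · rintro (h | ⟨h, hc⟩ | ⟨ha, h⟩ | h)
    · exact ⟨_, [], by simp, h, List.nil_sublist _⟩
    · exact ⟨[a, b], [c], rfl, h, List.singleton_sublist.2 hc⟩
    · exact ⟨[a], [b, c], rfl, List.singleton_sublist.2 ha, h⟩
    · exact ⟨[], _, rfl, List.nil_sublist _, h⟩

theorem contains132_iff {l : List ℕ} :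
    ContainsPat l [1, 3, 2] ↔ ∃ a b c, [a, b, c] <+ l ∧ a < c ∧ c ≤ b := by
  constructor
  · rintro ⟨s, hs, hlen, hiso⟩
    match s, hlen with
    | [a, b, c], _ =>
      have h01 := hiso 0 1 (by simp) (by simp)
      have h02 := hiso 0 2 (by simp) (by simp)
      have h12 := hiso 1 2 (by simp) (by simp)
      simp only [List.getD_cons_zero, List.getD_cons_succ] at h01 h02 h12
      exact ⟨a, b, c, hs, by simpa using h02, by simpa using h12⟩
  · rintro ⟨a, b, c, hs, hac, hcb⟩
    refine ⟨[a, b, c], hs, rfl, fun i j hij hj => ?_⟩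
    simp only [List.length_cons, List.length_nil] at hj
    interval_cases j <;> interval_cases i <;> simp [hac, hac.trans_le hcb, not_lt.2 hcb]

theorem AvoidsPat.sublist {s l p : List ℕ} (h : AvoidsPat l p) (hs : s <+ l) :
    AvoidsPat s p := fun ⟨t, ht, hiso⟩ => h ⟨t, ht.trans hs, hiso⟩

theorem avoids132_map_iff {f : ℕ → ℕ} (hf : StrictMono f) {l : List ℕ} :
    AvoidsPat (l.map f) [1, 3, 2] ↔ AvoidsPat l [1, 3, 2] := by
  refine not_congr ⟨fun h => ?_, fun h => ?_⟩
  · obtain ⟨a, b, c, hs, hac, hcb⟩ := contains132_iff.1 h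
    obtain ⟨l', hl', he⟩ := List.sublist_map_iff.1 hs
    match l', he with
    | [a', b', c'], he =>
      simp only [List.map_cons, List.map_nil, List.cons.injEq, and_true] at he
      obtain ⟨rfl, rfl, rfl⟩ := he
      exact contains132_iff.2 ⟨a', b', c', hl', hf.lt_iff_lt.1 hac, hf.le_iff_le.1 hcb⟩
  · obtain ⟨a, b, c, hs, hac, hcb⟩ := contains132_iff.1 h
    exact contains132_iff.2 ⟨f a, f b, f c, hs.map f, hf hac, hf.monotone hcb⟩

theorem avoids132_map_succ_concat_one_iff {l : List ℕ} :
    AvoidsPat (l.map (· + 1) ++ [1]) [1, 3, 2] ↔ AvoidsPat l [1, 3, 2] := by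
  have hmap := avoids132_map_iff (f := (· + 1)) (strictMono_id.add_const 1) (l := l)
  refine ⟨fun h => hmap.1 (h.sublist (List.sublist_append_left _ _)), fun h hc => hmap.2 h ?_⟩
  obtain ⟨a, b, c, hs, hac, hcb⟩ := contains132_iff.1 hc
  rcases triple_sublist_append_iff.1 hs with habc | ⟨hab, hc⟩ | ⟨-, hbc⟩ | habc
  · exact contains132_iff.2 ⟨a, b, c, habc, hac, hcb⟩
  · obtain rfl := List.mem_singleton.1 hc
    obtain ⟨y, -, rfl⟩ := List.mem_map.1 (hab.subset List.mem_cons_self)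
    omega
  · simpa using hbc.length_le
  · simpa using habc.length_le

theorem isRLMax_cons_zero (a : ℕ) (l : List ℕ) : IsRLMax (a :: l) 0 ↔ ∀ y ∈ l, y < a := by
  simp only [IsRLMax, List.length_cons, List.getD_cons_zero, List.mem_iff_getElem]
  constructor
  · rintro h y ⟨j, hj, rfl⟩
    simpa [hj] using h (j + 1) j.succ_pos (by omega)
  · intro h j hj hjl
    obtain ⟨j, rfl⟩ := Nat.exists_eq_add_of_lt hj
    simpa [show j < l.length by omega] using h _ ⟨j, by omega, rfl⟩

theorem isRLMax_cons_succ (a : ℕ) (l : List ℕ) (i : ℕ) :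
    IsRLMax (a :: l) (i + 1) ↔ IsRLMax l i := by
  simp only [IsRLMax, List.length_cons, List.getD_cons_succ]
  constructor
  · intro h j hij hj
    simpa using h (j + 1) (by omega) (by omega)
  · intro h j hij hj
    obtain ⟨j, rfl⟩ : ∃ j', j = j' + 1 := ⟨j - 1, by omega⟩
    simpa using h j (by omega) (by omega)

theorem shortCount_eq_sum (l : List ℕ) :
    shortCount l = ∑ i ∈ Finset.range l.length, if ¬ IsRLMax l i then 1 else 0 := by
  rw [shortCount, Finset.sum_boole, Nat.cast_id, ← Set.ncard_coe_finset]
  congr 1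
  ext i
  simp

@[simp]
theorem shortCount_nil : shortCount [] = 0 := by
  simp [shortCount_eq_sum]

theorem shortCount_cons (a : ℕ) (l : List ℕ) :
    shortCount (a :: l) = (if ∀ y ∈ l, y < a then 0 else 1) + shortCount l := by
  simp only [shortCount_eq_sum, List.length_cons, Finset.sum_range_succ', isRLMax_cons_succ,
    isRLMax_cons_zero]
  split_ifs <;> omega

theorem shortCount_lt_length {l : List ℕ} (hl : l ≠ []) : shortCount l < l.length := by
  induction l with
  | nil => exact absurd rfl hl
  | cons a t ih =>
    rw [shortCount_cons]
    rcases eq_or_ne t [] with rfl | ht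
    · simp
    · have := ih ht
      rw [List.length_cons]
      split_ifs <;> omega

theorem shortCount_append_add_of_perm (A : List ℕ) {t₁ t₂ : List ℕ} (hp : t₁ ~ t₂) :
    shortCount (A ++ t₁) + shortCount t₂ = shortCount (A ++ t₂) + shortCount t₁ := by
  induction A with
  | nil => simp [Nat.add_comm]
  | cons a A ih =>
    have hmem : ∀ y, y ∈ A ++ t₁ ↔ y ∈ A ++ t₂ := by simp [hp.mem_iff]
    simp only [List.cons_append, shortCount_cons, hmem]
    omega

theorem shortCount_concat_of_forall_lt {B : List ℕ} {x : ℕ} (h : ∀ b ∈ B, b < x) :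
    shortCount (B ++ [x]) = B.length := by
  induction B with
  | nil => simp [shortCount_cons]
  | cons b B ih =>
    have hx : ¬ ∀ y ∈ B ++ [x], y < b := fun h' => lt_asymm (h b (by simp)) (h' x (by simp))
    rw [List.cons_append, shortCount_cons, if_neg hx, ih fun c hc => h c (by simp [hc])]
    simp [Nat.add_comm]

theorem shortCount_concat_of_forall_gt {C : List ℕ} {y : ℕ} (h : ∀ c ∈ C, y < c) :
    shortCount (C ++ [y]) = shortCount C := by
  induction C with
  | nil => simp [shortCount_cons]
  | cons c C ih =>
    have hy : (∀ z ∈ C ++ [y], z < c) ↔ ∀ z ∈ C, z < c := by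
      simp [or_imp, forall_and, h c (by simp)]
    rw [List.cons_append, shortCount_cons, shortCount_cons, if_congr hy rfl rfl,
      ih fun c hc => h c (by simp [hc])]

theorem shortCount_map {f : ℕ → ℕ} (hf : StrictMono f) (l : List ℕ) :
    shortCount (l.map f) = shortCount l := by
  induction l with
  | nil => rfl
  | cons a l ih => simp [shortCount_cons, hf.lt_iff_lt, ih]

def NoInnerRLMax (B : List ℕ) : Prop :=
  ∀ C y D, B = C ++ y :: D → D ≠ [] → ¬ ∀ z ∈ D, z < y

theorem noInnerRLMax_nil : NoInnerRLMax [] := by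
  intro C y D h
  simp at h

theorem noInnerRLMax_cons_iff {a : ℕ} {l : List ℕ} :
    NoInnerRLMax (a :: l) ↔ (l ≠ [] → ¬ ∀ z ∈ l, z < a) ∧ NoInnerRLMax l := by
  constructor
  · intro h
    exact ⟨h [] a l rfl, fun C y D hl => h (a :: C) y D (by simp [hl])⟩
  · rintro ⟨ha, hl⟩ (_ | ⟨c, C⟩) y D h
    · simp only [List.nil_append, List.cons.injEq] at h
      obtain ⟨rfl, rfl⟩ := h
      exact ha
    · simp only [List.cons_append, List.cons.injEq] at h
      exact hl C y D h.2

theorem NoInnerRLMax.shortCount_eq {B : List ℕ} (h : NoInnerRLMax B) :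
    shortCount B = B.length - 1 := by
  induction B with
  | nil => simp
  | cons b B ih =>
    rw [noInnerRLMax_cons_iff] at h
    rw [shortCount_cons, ih h.2]
    rcases eq_or_ne B [] with rfl | hB
    · simp
    · rw [if_neg (h.1 hB)]
      have := List.length_pos_iff.2 hB
      rw [List.length_cons]
      omega

theorem NoInnerRLMax.le_of_mem_concat {B : List ℕ} {c : ℕ} (h : NoInnerRLMax (B ++ [c])) :
    ∀ b ∈ B ++ [c], b ≤ c := by
  induction B with
  | nil => simp
  | cons b B ih =>
    rw [List.cons_append, noInnerRLMax_cons_iff] at h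
    have ih := ih h.2
    intro a ha
    rcases List.mem_cons.1 ha with rfl | ha
    · obtain ⟨z, hz, hbz⟩ := not_forall₂.1 (h.1 (by simp))
      exact (not_lt.1 hbz).trans (ih z hz)
    · exact ih a ha

theorem noInnerRLMax_or_exists_split (l : List ℕ) :
    NoInnerRLMax l ∨ ∃ A x B, l = A ++ x :: B ∧ B ≠ [] ∧ (∀ b ∈ B, b < x) ∧ NoInnerRLMax B := by
  induction l with
  | nil => exact Or.inl noInnerRLMax_nil
  | cons a l ih =>
    rcases ih with hl | ⟨A, x, B, rfl, hB, hBx, hBin⟩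
    · by_cases ha : l ≠ [] ∧ ∀ z ∈ l, z < a
      · exact Or.inr ⟨[], a, l, rfl, ha.1, ha.2, hl⟩
      · exact Or.inl (noInnerRLMax_cons_iff.2 ⟨fun hl' h => ha ⟨hl', h⟩, hl⟩)
    · exact Or.inr ⟨a :: A, x, B, rfl, hB, hBx, hBin⟩

theorem NoInnerRLMax.eq_nil_of_cons_eq_append_cons {B₁ B₂ C : List ℕ} {x₁ x₂ : ℕ}
    (h : NoInnerRLMax B₁) (hB₂ : B₂ ≠ []) (hx₂ : ∀ b ∈ B₂, b < x₂)
    (he : x₁ :: B₁ = C ++ x₂ :: B₂) : C = [] := by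
  rcases C with _ | ⟨c, C⟩
  · rfl
  · exact absurd hx₂ (h C x₂ B₂ (List.cons.inj he).2 hB₂)

theorem NoInnerRLMax.eq_nil_of_eq_append {B₁ B₂ C : List ℕ} (h : NoInnerRLMax B₁)
    (hB₂ : B₂ ≠ []) (hC : ∀ a ∈ C, ∀ b ∈ B₂, b < a) (he : B₁ = C ++ B₂) : C = [] := by
  rcases List.eq_nil_or_concat' C with rfl | ⟨C, a, rfl⟩
  · rfl
  · exact absurd (hC a (by simp)) (h C a B₂ (by simp [he]) hB₂)

theorem forall_lt_of_avoids132 {A B : List ℕ} {y : ℕ} (hnd : (A ++ y :: B).Nodup)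
    (hav : AvoidsPat (A ++ y :: B) [1, 3, 2]) (hy : ∀ b ∈ B, b < y) :
    ∀ a ∈ A, ∀ b ∈ B, b < a := by
  intro a ha b hb
  have hab : a ≠ b := (List.nodup_append.1 hnd).2.2 a ha b (List.mem_cons_of_mem y hb)
  by_contra hba
  have hs : [a, y, b] <+ A ++ y :: B :=
    (List.singleton_sublist.2 ha).append (List.cons_sublist_cons.2 (List.singleton_sublist.2 hb))
  exact hav (contains132_iff.2 ⟨a, y, b, hs, by omega, (hy b hb).le⟩)

theorem lt_of_avoids132_concat {D : List ℕ} {c x m : ℕ} (hav : AvoidsPat (D ++ [c, x]) [1, 3, 2])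
    (hm : m ∈ D ++ [c]) (hmx : m < x) : c < x := by
  rcases List.mem_append.1 hm with hm | hm
  · by_contra hcx
    exact hav (contains132_iff.2
      ⟨m, c, x, (List.singleton_sublist.2 hm).append (List.Sublist.refl _), hmx, by omega⟩)
  · rw [List.mem_singleton] at hm
    omega

/-- `l'` arises from `l = A ++ x :: B` by moving its last non-final right-to-left maximum `x`
to the end. -/
def RLMaxToEnd (l l' : List ℕ) : Prop :=
  ∃ A x B, l = A ++ x :: B ∧ l' = A ++ B ++ [x] ∧ B ≠ [] ∧
    (∀ b ∈ B, b < x) ∧ (∀ a ∈ A, ∀ b ∈ B, b < a) ∧ NoInnerRLMax B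

namespace RLMaxToEnd

variable {l l' : List ℕ}

theorem perm (h : RLMaxToEnd l l') : l ~ l' := by
  obtain ⟨A, x, B, rfl, rfl, -⟩ := h
  rw [List.append_assoc]
  exact (List.perm_append_singleton x B).symm.append_left A

theorem shortCount_eq (h : RLMaxToEnd l l') : shortCount l' = shortCount l + 1 := by
  obtain ⟨A, x, B, rfl, rfl, hB, hBx, -, hBin⟩ := h
  have key := shortCount_append_add_of_perm A (List.perm_append_singleton x B).symm
  rw [shortCount_concat_of_forall_lt hBx, shortCount_cons, if_pos hBx, hBin.shortCount_eq] at key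
  have := List.length_pos_iff.2 hB
  rw [List.append_assoc]
  omega

theorem getLast?_ne_one (h : RLMaxToEnd l l') (h0 : 0 ∉ l) : l'.getLast? ≠ some 1 := by
  obtain ⟨A, x, B, rfl, rfl, hB, hBx, -⟩ := h
  obtain ⟨b, hb⟩ := List.exists_mem_of_ne_nil B hB
  have hb0 : b ≠ 0 := fun h => h0 (by simp [← h, hb])
  have := hBx b hb
  simp only [List.getLast?_append, List.getLast?_singleton, Option.some_or, ne_eq,
    Option.some.injEq]
  omega

theorem contains132_of_contains132_right (h : RLMaxToEnd l l')
    (hc : ContainsPat l' [1, 3, 2]) : ContainsPat l [1, 3, 2] := by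
  obtain ⟨A, x, B, rfl, rfl, -, hBx, -⟩ := h
  obtain ⟨a, b, c, hs, hac, hcb⟩ := contains132_iff.1 hc
  have hsub : A ++ B <+ A ++ x :: B := (List.sublist_cons_self x B).append_left A
  rcases triple_sublist_append_iff.1 hs with habc | ⟨hab, hc⟩ | ⟨-, hbc⟩ | habc
  · exact contains132_iff.2 ⟨a, b, c, habc.trans hsub, hac, hcb⟩
  · obtain rfl : c = x := List.mem_singleton.1 hc
    rcases pair_sublist_append_iff.1 hab with hab | ⟨-, hb⟩ | hab
    · exact contains132_iff.2 ⟨a, b, c, hab.append (by simp), hac, hcb⟩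
    · exact absurd (hBx b hb) (by omega)
    · exact absurd (hBx b (hab.subset (by simp))) (by omega)
  · simpa using hbc.length_le
  · simpa using habc.length_le

theorem contains132_of_contains132_left (h : RLMaxToEnd l l')
    (hc : ContainsPat l [1, 3, 2]) : ContainsPat l' [1, 3, 2] := by
  obtain ⟨A, x, B, rfl, rfl, -, hBx, hAB, -⟩ := h
  obtain ⟨a, b, c, hs, hac, hcb⟩ := contains132_iff.1 hc
  have hsub : A ++ B <+ A ++ B ++ [x] := List.sublist_append_left _ _
  rcases triple_sublist_append_iff.1 hs with habc | ⟨hab, hc⟩ | ⟨ha, hbc⟩ | habc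
  · exact contains132_iff.2 ⟨a, b, c, (habc.trans (List.sublist_append_left A B)).trans hsub,
      hac, hcb⟩
  · rcases List.mem_cons.1 hc with rfl | hc
    · have hc : [c] <+ B ++ [c] := List.sublist_append_right B [c]
      exact contains132_iff.2 ⟨a, b, c, by simpa using hab.append hc, hac, hcb⟩
    · exact contains132_iff.2 ⟨a, b, c, (hab.append (List.singleton_sublist.2 hc)).trans hsub,
        hac, hcb⟩
  · rcases List.sublist_cons_iff.1 hbc with hbc | ⟨r, hr, hc⟩
    · exact contains132_iff.2 ⟨a, b, c,
        ((List.singleton_sublist.2 ha).append hbc).trans hsub, hac, hcb⟩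
    · obtain ⟨rfl, rfl⟩ := List.cons.inj hr
      exact absurd (hAB a ha c (List.singleton_sublist.1 hc)) (by omega)
  · rcases List.sublist_cons_iff.1 habc with habc | ⟨r, hr, hbc⟩
    · exact contains132_iff.2 ⟨a, b, c, (habc.trans (List.sublist_append_right A B)).trans hsub,
        hac, hcb⟩
    · obtain ⟨rfl, rfl⟩ := List.cons.inj hr
      exact absurd (hBx c (hbc.subset (by simp))) (by omega)

theorem right_unique {l l₁ l₂ : List ℕ} (h₁ : RLMaxToEnd l l₁) (h₂ : RLMaxToEnd l l₂) :
    l₁ = l₂ := by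
  obtain ⟨A₁, x₁, B₁, rfl, rfl, hB₁, hBx₁, -, hBin₁⟩ := h₁
  obtain ⟨A₂, x₂, B₂, he, rfl, hB₂, hBx₂, -, hBin₂⟩ := h₂
  rcases List.append_eq_append_iff.1 he with ⟨C, rfl, hC⟩ | ⟨C, rfl, hC⟩
  · obtain rfl := hBin₁.eq_nil_of_cons_eq_append_cons hB₂ hBx₂ hC
    obtain ⟨rfl, rfl⟩ := List.cons.inj hC
    simp
  · obtain rfl := hBin₂.eq_nil_of_cons_eq_append_cons hB₁ hBx₁ hC
    obtain ⟨rfl, rfl⟩ := List.cons.inj hC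
    simp

theorem left_unique {l₁ l₂ l' : List ℕ} (h₁ : RLMaxToEnd l₁ l') (h₂ : RLMaxToEnd l₂ l') :
    l₁ = l₂ := by
  obtain ⟨A₁, x₁, B₁, rfl, rfl, hB₁, -, hAB₁, hBin₁⟩ := h₁
  obtain ⟨A₂, x₂, B₂, rfl, he, hB₂, -, hAB₂, hBin₂⟩ := h₂
  obtain ⟨hAB, hx⟩ := List.append_inj' he rfl
  obtain rfl := List.singleton_inj.1 hx
  rcases List.append_eq_append_iff.1 hAB with ⟨C, rfl, hC⟩ | ⟨C, rfl, hC⟩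
  · obtain rfl := hBin₁.eq_nil_of_eq_append hB₂ (fun a ha => hAB₂ a (by simp [ha])) hC
    simp [hC]
  · obtain rfl := hBin₂.eq_nil_of_eq_append hB₁ (fun a ha => hAB₁ a (by simp [ha])) hC
    simp [hC]

theorem mem_A132_iff (h : RLMaxToEnd l l') {n k : ℕ} :
    l' ∈ A132 n (k + 1) ↔ l ∈ A132 n k := by
  simp only [A132, Set.mem_ofPred_eq, h.shortCount_eq, add_left_inj]
  refine and_congr ⟨fun h' => h.perm.trans h', fun h' => h.perm.symm.trans h'⟩
    (and_congr (not_congr ?_) Iff.rfl)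
  exact ⟨h.contains132_of_contains132_right, h.contains132_of_contains132_left⟩

end RLMaxToEnd

theorem exists_rlMaxToEnd {l : List ℕ} (hnd : l.Nodup) (hav : AvoidsPat l [1, 3, 2])
    (hk : shortCount l + 2 ≤ l.length) : ∃ l', RLMaxToEnd l l' := by
  rcases noInnerRLMax_or_exists_split l with hin | ⟨A, x, B, rfl, hB, hBx, hBin⟩
  · have := hin.shortCount_eq
    omega
  · exact ⟨A ++ B ++ [x], A, x, B, rfl, rfl, hB, hBx, forall_lt_of_avoids132 hnd hav hBx, hBin⟩

theorem exists_rlMaxToEnd_concat {C : List ℕ} {x : ℕ} (hnd : (C ++ [x]).Nodup)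
    (hav : AvoidsPat (C ++ [x]) [1, 3, 2]) (h1 : 1 ∈ C) (hx : 1 < x) :
    ∃ l, RLMaxToEnd l (C ++ [x]) := by
  rcases noInnerRLMax_or_exists_split C with hin | ⟨A, y, B, rfl, hB, hBy, hBin⟩
  · obtain ⟨D, c, rfl⟩ := (List.eq_nil_or_concat' C).resolve_left (List.ne_nil_of_mem h1)
    have hcx : c < x := lt_of_avoids132_concat (by simpa using hav) h1 hx
    exact ⟨x :: (D ++ [c]), [], x, D ++ [c], rfl, by simp, by simp,
      fun b hb => (hin.le_of_mem_concat b hb).trans_lt hcx, by simp, hin⟩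
  · obtain ⟨D, c, rfl⟩ := (List.eq_nil_or_concat' B).resolve_left hB
    have hcx : c < x :=
      lt_of_avoids132_concat (D := A ++ y :: D) (by simpa using hav) (by simpa using h1) hx
    have hAB := forall_lt_of_avoids132 (List.nodup_append.1 hnd).1
      (hav.sublist (List.sublist_append_left _ _)) hBy
    refine ⟨(A ++ [y]) ++ x :: (D ++ [c]), A ++ [y], x, D ++ [c], rfl, by simp, hB,
      fun b hb => (hBin.le_of_mem_concat b hb).trans_lt hcx, fun a ha => ?_, hBin⟩
    rcases List.mem_append.1 ha with ha | ha
    · exact hAB a ha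
    · rw [List.mem_singleton.1 ha]
      exact hBy

section Permutations

variable {n : ℕ} {l : List ℕ}

theorem IsPermList.length_eq (h : IsPermList n l) : l.length = n := by
  simpa using List.Perm.length_eq h

theorem IsPermList.nodup (h : IsPermList n l) : l.Nodup :=
  h.nodup_iff.2 List.nodup_range'

theorem IsPermList.mem_iff (h : IsPermList n l) {y : ℕ} : y ∈ l ↔ 1 ≤ y ∧ y ≤ n := by
  rw [List.Perm.mem_iff h, List.mem_range'_1]
  omega

theorem isPermList_map_succ_concat_one_iff :
    IsPermList (n + 1) (l.map (· + 1) ++ [1]) ↔ IsPermList n l := by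
  have hr : List.range' 1 (n + 1) ~ (List.range' 1 n).map (· + 1) ++ [1] := by
    have h : (List.range' 1 n).map (· + 1) = List.range' 2 n := by
      simpa [add_comm] using List.map_add_range' (a := 1) 1 n 1
    rw [h, List.range'_succ]
    exact (List.perm_append_singleton 1 _).symm
  calc IsPermList (n + 1) (l.map (· + 1) ++ [1])
      ↔ l.map (· + 1) ++ [1] ~ (List.range' 1 n).map (· + 1) ++ [1] :=
        ⟨fun h => h.trans hr, fun h => h.trans hr.symm⟩
    _ ↔ IsPermList n l :=
        (List.perm_append_right_iff _).trans (List.map_perm_map_iff (add_left_injective 1))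

end Permutations

theorem A132_finite (n k : ℕ) : (A132 n k).Finite :=
  (List.finite_toSet (List.range' 1 n).permutations).subset
    fun _ hl => List.mem_permutations.2 hl.1

theorem A132_zero_zero : A132 0 0 = {[]} := by
  ext l
  simp only [A132, IsPermList, List.range'_zero, List.perm_nil, Set.mem_ofPred_eq,
    Set.mem_singleton_iff, and_iff_left_iff_imp]
  rintro rfl
  refine ⟨fun hc => ?_, shortCount_nil⟩
  obtain ⟨a, b, c, hs, -⟩ := contains132_iff.1 hc
  simpa using hs.length_le

theorem A132_eq_empty {n k : ℕ} (hn : 0 < n) (hk : n ≤ k) : A132 n k = ∅ := by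
  refine Set.eq_empty_of_forall_notMem fun l ⟨hperm, _, hsc⟩ => ?_
  have hlen := hperm.length_eq
  have := shortCount_lt_length (List.ne_nil_of_length_pos (l := l) (by omega))
  omega

theorem map_succ_concat_one_mem_A132_iff {n k : ℕ} {l : List ℕ} :
    l.map (· + 1) ++ [1] ∈ A132 (n + 1) k ↔ l ∈ A132 n k := by
  simp only [A132, Set.mem_ofPred_eq, isPermList_map_succ_concat_one_iff,
    avoids132_map_succ_concat_one_iff]
  refine and_congr_right fun hperm => and_congr_right fun _ => ?_
  rw [shortCount_concat_of_forall_gt, shortCount_map fun _ _ h => Nat.add_lt_add_right h 1]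
  intro c hc
  obtain ⟨y, hy, rfl⟩ := List.mem_map.1 hc
  have := hperm.mem_iff.1 hy
  omega

theorem A132_inter_getLast_eq_one (n k : ℕ) :
    A132 (n + 1) k ∩ {l | l.getLast? = some 1} = (fun l => l.map (· + 1) ++ [1]) '' A132 n k := by
  ext l
  constructor
  · rintro ⟨hl, hlast⟩
    obtain ⟨M, rfl⟩ := List.getLast?_eq_some_iff.1 hlast
    have hM : (M.map (· - 1)).map (· + 1) = M := by
      rw [List.map_map]
      conv_rhs => rw [← M.map_id]
      refine List.map_congr_left fun c hc => ?_
      have := hl.1.mem_iff.1 (List.mem_append_left _ hc)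
      simp only [Function.comp_apply, id_eq]
      omega
    refine ⟨M.map (· - 1), ?_, by simp only [hM]⟩
    rw [← map_succ_concat_one_mem_A132_iff, hM]
    exact hl
  · rintro ⟨l, hl, rfl⟩
    exact ⟨map_succ_concat_one_mem_A132_iff.2 hl, by simp⟩

theorem ncard_A132_inter_getLast_eq_one (n k : ℕ) :
    (A132 (n + 1) k ∩ {l | l.getLast? = some 1}).ncard = (A132 n k).ncard := by
  rw [A132_inter_getLast_eq_one, Set.ncard_image_of_injective]
  intro a b h
  exact List.map_injective_iff.2 (add_left_injective 1) (List.append_inj' h rfl).1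

theorem exists_rlMaxToEnd_of_mem_A132 {n k : ℕ} {l' : List ℕ} (hl' : l' ∈ A132 n k)
    (hne : l' ≠ []) (hlast : l'.getLast? ≠ some 1) : ∃ l, RLMaxToEnd l l' := by
  obtain ⟨C, x, rfl⟩ := (List.eq_nil_or_concat' l').resolve_left hne
  obtain ⟨hperm, hav, -⟩ := hl'
  have hx1 : x ≠ 1 := by simpa using hlast
  obtain ⟨hx, hxn⟩ := hperm.mem_iff.1 (List.mem_append_right C (List.mem_singleton_self x))
  have h1 : 1 ∈ C := by
    have := hperm.mem_iff.2 ⟨le_rfl, hx.trans hxn⟩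
    simp only [List.mem_append, List.mem_singleton] at this
    exact this.resolve_right (Ne.symm hx1)
  exact exists_rlMaxToEnd_concat hperm.nodup hav h1 (by omega)

theorem ncard_A132_sdiff_getLast_eq_one {n k : ℕ} (hk : k + 2 ≤ n) :
    (A132 n (k + 1) \ {l | l.getLast? = some 1}).ncard = (A132 n k).ncard := by
  have hex : ∀ l ∈ A132 n k, ∃ l', RLMaxToEnd l l' := fun l ⟨hperm, hav, hsc⟩ =>
    exists_rlMaxToEnd hperm.nodup hav (by rw [hperm.length_eq, hsc]; exact hk)
  symm
  refine Set.ncard_congr (fun l hl => (hex l hl).choose) (fun l hl => ?_)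
    (fun l₁ l₂ h₁ h₂ he => ?_) (fun l' hl' => ?_)
  · have h := (hex l hl).choose_spec
    exact ⟨h.mem_A132_iff.2 hl, h.getLast?_ne_one fun h0 => by simpa using hl.1.mem_iff.1 h0⟩
  · exact (hex l₁ h₁).choose_spec.left_unique (he ▸ (hex l₂ h₂).choose_spec)
  · have hne : l' ≠ [] := List.ne_nil_of_length_pos (by rw [hl'.1.1.length_eq]; omega)
    obtain ⟨l, h⟩ := exists_rlMaxToEnd_of_mem_A132 hl'.1 hne hl'.2
    have hl := h.mem_A132_iff.1 hl'.1
    exact ⟨l, hl, (hex l hl).choose_spec.right_unique h⟩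

theorem A132_zero_sdiff_getLast_eq_one (n : ℕ) :
    A132 (n + 1) 0 \ {l | l.getLast? = some 1} = ∅ := by
  refine Set.eq_empty_of_forall_notMem fun l' ⟨hl', hlast⟩ => ?_
  have hne : l' ≠ [] := List.ne_nil_of_length_pos (by rw [hl'.1.length_eq]; omega)
  obtain ⟨l, h⟩ := exists_rlMaxToEnd_of_mem_A132 hl' hne hlast
  have := h.shortCount_eq
  have := hl'.2.2
  omega

theorem ncard_A132_succ (n k : ℕ) : (A132 (n + 1) k).ncard =
    (A132 n k).ncard + (A132 (n + 1) k \ {l | l.getLast? = some 1}).ncard := by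
  rw [← Set.ncard_inter_add_ncard_sdiff_eq_ncard (A132 (n + 1) k) {l | l.getLast? = some 1}
    (A132_finite _ _), ncard_A132_inter_getLast_eq_one]

theorem ncard_A132_zero (n : ℕ) : (A132 n 0).ncard = 1 := by
  induction n with
  | zero => simp [A132_zero_zero]
  | succ n ih => rw [ncard_A132_succ, ih, A132_zero_sdiff_getLast_eq_one, Set.ncard_empty]

theorem ncard_A132_succ_succ {n k : ℕ} (hk : k < n) :
    (A132 (n + 1) (k + 1)).ncard = (A132 n (k + 1)).ncard + (A132 (n + 1) k).ncard := by
  rw [ncard_A132_succ, ncard_A132_sdiff_getLast_eq_one (by omega)]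

/-- The entry `T_{n,k}` of Catalan's triangle. -/
def catalanTriangle (n k : ℕ) : ℚ :=
  ((n : ℚ) - k + 1) / (n + 1) * (n + k).choose n

theorem catalanTriangle_zero (n : ℕ) : catalanTriangle n 0 = 1 := by
  rw [catalanTriangle, Nat.add_zero, Nat.choose_self, Nat.cast_one, mul_one, Nat.cast_zero,
    sub_zero]
  exact div_self (by positivity)

theorem catalanTriangle_succ_self (n : ℕ) : catalanTriangle n (n + 1) = 0 := by
  simp [catalanTriangle]

theorem catalanTriangle_succ_succ (n k : ℕ) :
    catalanTriangle (n + 1) (k + 1) = catalanTriangle n (k + 1) + catalanTriangle (n + 1) k := by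
  have pascal : (n + k + 1 + 1).choose (n + 1) =
      (n + k + 1).choose n + (n + k + 1).choose (n + 1) :=
    Nat.choose_succ_succ _ _
  have hsymm : ((n + k + 1).choose (n + 1) : ℚ) * (n + 1) = (n + k + 1).choose n * (k + 1) := by
    have := Nat.choose_succ_right_eq (n + k + 1) n
    rw [show n + k + 1 - n = k + 1 by omega] at this
    exact_mod_cast this
  unfold catalanTriangle
  rw [show n + 1 + (k + 1) = n + k + 1 + 1 by omega, pascal, show n + (k + 1) = n + k + 1 by omega,
    show n + 1 + k = n + k + 1 by omega]
  push_cast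
  field_simp
  linear_combination (-1 : ℚ) * hsymm

theorem ncard_A132_eq_catalanTriangle (n k : ℕ) (hk : k ≤ n + 1) :
    ((A132 (n + 1) k).ncard : ℚ) = catalanTriangle n k := by
  induction n generalizing k with
  | zero =>
    interval_cases k
    · simp [ncard_A132_zero, catalanTriangle_zero]
    · simp [A132_eq_empty, catalanTriangle_succ_self]
  | succ n ihn =>
    induction k with
    | zero => simp [ncard_A132_zero, catalanTriangle_zero]
    | succ k ihk =>
      rcases (show k = n + 1 ∨ k ≤ n by omega) with rfl | hkn
      · simp [A132_eq_empty, catalanTriangle_succ_self]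
      · rw [ncard_A132_succ_succ (by omega), Nat.cast_add, ihn (k + 1) (by omega),
          ihk (by omega), catalanTriangle_succ_succ]

/-- The number of 132-avoiding permutations of length `n` with exactly `k` short values is
`T_{n-1,k} = ((n-k)/n) * choose (n-1+k) (n-1)` for `0 ≤ k ≤ n-1`, and is zero for `k ≥ n`. -/
theorem card_A132 (n : ℕ) (hn : 1 ≤ n) :
    (∀ k, k ≤ n - 1 →
      ((A132 n k).ncard : ℚ) = ((n : ℚ) - k) / n * ((n - 1 + k).choose (n - 1) : ℚ)) ∧
    (∀ k, n ≤ k → A132 n k = ∅) := by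
  obtain ⟨m, rfl⟩ := Nat.exists_eq_add_of_le' hn
  refine ⟨fun k hk => ?_, fun k hk => A132_eq_empty (by omega) hk⟩
  rw [ncard_A132_eq_catalanTriangle m k (by omega), catalanTriangle, Nat.add_sub_cancel]
  push_cast
  ring
end

section
/- Let π be a 132-avoiding permutation of length n whose last entry is 1, and let 0 ≤ i ≤ n. If the insertion step at position i applied to π removes at least one entry (i.e., inserting the value n+1 after the first i entries creates an occurrence of 132), then it removes at least two entries; in particular, the output of the insertion step then has length at most n−1. -/
open List

attribute [local instance] Classical.propDecidable

/-!
Inserting `n + 1` at the end cannot create a 132, since the largest entry cannot play the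
role of the `2`. Inserting it anywhere else leaves the last entry `1` of `π` at the end, and the
smallest entry cannot play the role of the `2` either. So any 132 of the new sequence already
lies in its first `n` entries, and the longest 132-avoiding prefix has length at most `n - 1`.
-/

theorem ContainsPat.mono {l₁ l₂ p : List ℕ} (hl : l₁.Sublist l₂) (h : ContainsPat l₁ p) :
    ContainsPat l₂ p :=
  let ⟨s, hs, hiso⟩ := h
  ⟨s, hs.trans hl, hiso⟩

theorem orderIsoList_132_iff {s : List ℕ} :
    OrderIsoList s [1, 3, 2] ↔ ∃ a b c, s = [a, b, c] ∧ a < c ∧ c ≤ b := by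
  constructor
  · rintro ⟨hlen, hord⟩
    obtain ⟨a, b, c, rfl⟩ := List.length_eq_three.1 hlen
    have hac := (hord 0 2 (by simp) (by simp)).2 (by decide)
    have hbc := (hord 1 2 (by simp) (by simp)).not.2 (by decide)
    exact ⟨a, b, c, rfl, hac, not_lt.1 hbc⟩
  · rintro ⟨a, b, c, rfl, hac, hcb⟩
    refine ⟨rfl, fun i j hij hj => ?_⟩
    simp only [List.length_cons, List.length_nil] at hj
    interval_cases j <;> interval_cases i <;> simp <;> omega

/-- A 132 of `M ++ [a]` that uses `a` needs entries `x < a ≤ y` of `M`. -/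
theorem ContainsPat.of_append_singleton_132 {M : List ℕ} {a : ℕ}
    (hM : ∀ x ∈ M, ∀ y ∈ M, x < a → y < a) (h : ContainsPat (M ++ [a]) [1, 3, 2]) :
    ContainsPat M [1, 3, 2] := by
  obtain ⟨s, hs, hiso⟩ := h
  obtain ⟨s₁, s₂, rfl, hs₁, hs₂⟩ := List.sublist_append_iff.1 hs
  rcases List.sublist_singleton.1 hs₂ with rfl | rfl
  · exact ⟨s₁, by simpa using hs₁, by simpa using hiso⟩
  · obtain ⟨x', y', c, hxyc, hxc, hcy⟩ := orderIsoList_132_iff.1 hiso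
    obtain ⟨x, y, rfl⟩ := List.length_eq_two.1 (by simpa using congrArg List.length hxyc)
    obtain ⟨rfl, rfl, rfl⟩ : x = x' ∧ y = y' ∧ a = c := by simpa using hxyc
    exact absurd (hM x (hs₁.subset (by simp)) y (hs₁.subset (by simp)) hxc) (not_lt.2 hcy)

theorem length_insertMax (l : List ℕ) (i : ℕ) : (insertMax l i).length = l.length + 1 := by
  simp only [insertMax, List.length_append, List.length_take, List.length_cons, List.length_drop]
  omega

theorem mem_insertMax {l : List ℕ} {i x : ℕ} :
    x ∈ insertMax l i ↔ x ∈ l ∨ x = l.length + 1 := by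
  conv_rhs => arg 1; rw [← List.take_append_drop i l]
  simp only [insertMax, List.mem_append, List.mem_cons]
  tauto

theorem insertMax_of_length_le {l : List ℕ} {i : ℕ} (hi : l.length ≤ i) :
    insertMax l i = l ++ [l.length + 1] := by
  simp [insertMax, List.take_of_length_le hi, List.drop_of_length_le hi]

theorem getLast?_insertMax_of_lt_length {l : List ℕ} {i : ℕ} (hi : i < l.length) :
    (insertMax l i).getLast? = l.getLast? := by
  have hne : l.drop i ≠ [] := by simpa using hi
  have h := List.getLast?_append_of_ne_nil (l.take i ++ [l.length + 1]) hne
  rw [List.append_assoc, List.singleton_append] at h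
  rw [insertMax, h, ← List.getLast?_append_of_ne_nil (l.take i) hne, List.take_append_drop]

theorem length_insStep_lt {p l : List ℕ} {i m : ℕ} (hm : 0 < m)
    (h : ContainsPat ((insertMax l i).take m) p) : (insStep p l i).length < m := by
  set L := insertMax l i
  set k := Nat.findGreatest (fun k => AvoidsPat (L.take k) p) L.length
  have hkL : k ≤ L.length := Nat.findGreatest_le _
  have hlen : (insStep p l i).length = k := by
    simp only [insStep, standardize, List.length_map, List.length_take]
    exact min_eq_left hkL
  rw [hlen]
  by_contra! hmk
  have hk : AvoidsPat (L.take k) p := Nat.findGreatest_of_ne_zero (m := k) rfl (by omega)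
  exact hk (h.mono (List.take_sublist_take_left hmk))

theorem removes_at_least_two_general (n : ℕ) (π : List ℕ)
    (h : IsPermList n π) (ha : AvoidsPat π [1, 3, 2]) (hlast : π.getLast? = some 1)
    (i : ℕ) (hrem : ContainsPat (insertMax π i) [1, 3, 2]) :
    (insStep [1, 3, 2] π i).length + 2 ≤ n + 1 ∧
      (insStep [1, 3, 2] π i).length ≤ n - 1 := by
  have hlen : π.length = n := by simpa using h.length_eq
  have hmem : ∀ x ∈ π, 1 ≤ x ∧ x ≤ n := fun x hx => by
    simpa [List.mem_range'_1, Nat.lt_succ_iff, add_comm] using h.subset hx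
  by_cases hi : n ≤ i
  · rw [insertMax_of_length_le (hlen ▸ hi)] at hrem
    refine absurd (hrem.of_append_singleton_132 fun x _ y hy _ => ?_) ha
    have := (hmem y hy).2
    omega
  obtain ⟨M, hM⟩ := List.getLast?_eq_some_iff.1 <|
    (getLast?_insertMax_of_lt_length (by omega : i < π.length)).trans hlast
  have hMlen : M.length = n := by
    simpa [length_insertMax, hlen] using (congrArg List.length hM).symm
  have hcont : ContainsPat M [1, 3, 2] := by
    refine (hM ▸ hrem).of_append_singleton_132 fun x hx _ _ hx1 => absurd hx1 (not_lt.2 ?_)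
    rcases mem_insertMax.1 (hM ▸ List.mem_append_left [1] hx) with hxπ | rfl
    · exact (hmem x hxπ).1
    · omega
  have := length_insStep_lt (i := i) (by omega : 0 < n)
    (by rwa [hM, List.take_left' hMlen] : ContainsPat ((insertMax π i).take n) [1, 3, 2])
  omega

/-- If the last entry of a 132-avoiding permutation `π` of length `n` is `1` and the
insertion step at position `i` removes at least one entry (i.e. inserting the new maximum
creates an occurrence of 132), then it removes at least two entries; in particular the
output has length at most `n - 1`. -/
theorem removes_at_least_two (n : ℕ) (π : List ℕ)
    (h : IsPermList n π) (ha : AvoidsPat π [1, 3, 2]) (hlast : π.getLast? = some 1)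
    (i : ℕ) (hi : i ≤ n) (hrem : ContainsPat (insertMax π i) [1, 3, 2]) :
    (insStep [1, 3, 2] π i).length + 2 ≤ n + 1 ∧
      (insStep [1, 3, 2] π i).length ≤ n - 1 :=
  removes_at_least_two_general n π h ha hlast i hrem
end
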